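/- arXiv:1701.00267 — 2 statements merged into one kernel-verified Lean document; each statement's English description precedes it below -/
import Mathlib

section
/- Let c be a C² positive function on an open set Ω. There exists α > 0 and an open subset Ω₀ ⊂ Ω on which -div(∇c/(c+α)²) > 0 pointwise if and only if there exists an open subset Ω̂ ⊂ Ω on which Δc < 2|∇c|²/c pointwise. -/
/-!
Expanding the divergence gives
`-div (∇c / (c + α)²) = (2 |∇c|² - (c + α) Δc) / (c + α)³`, so on `Ω` the left side is positive
exactly where `(c + α) Δc < 2 |∇c|²`. Enlarging `α` only makes this harder when `Δc > 0`, which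
gives one direction. Conversely, a strict inequality `c Δc < 2 |∇c|²` at one point persists for
some small `α > 0`, and then on a neighbourhood of that point since `Δc` and `∇c` are continuous.
-/

open MeasureTheory Real Set InnerProductSpace Filter Topology

noncomputable def vdiv {N : ℕ} (V : EuclideanSpace ℝ (Fin N) → EuclideanSpace ℝ (Fin N))
    (x : EuclideanSpace ℝ (Fin N)) : ℝ :=
  ∑ i, fderiv ℝ V x (EuclideanSpace.single i 1) i

noncomputable def lap {N : ℕ} (f : EuclideanSpace ℝ (Fin N) → ℝ)
    (x : EuclideanSpace ℝ (Fin N)) : ℝ :=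
  vdiv (fun y => gradient f y) x

theorem ContDiffOn.gradient_of_isOpen {F : Type*} [NormedAddCommGroup F] [InnerProductSpace ℝ F]
    [CompleteSpace F] {f : F → ℝ} {s : Set F} {m n : WithTop ℕ∞} (hf : ContDiffOn ℝ n f s)
    (hs : IsOpen s) (hmn : m + 1 ≤ n) : ContDiffOn ℝ m (gradient f) s :=
  (toDual ℝ F).symm.contDiff.comp_contDiffOn (hf.fderiv_of_isOpen hs hmn)

section Divergence

variable {N : ℕ}

theorem ContDiffOn.continuousOn_vdiv {V : EuclideanSpace ℝ (Fin N) → EuclideanSpace ℝ (Fin N)}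
    {s : Set (EuclideanSpace ℝ (Fin N))} (hV : ContDiffOn ℝ 1 V s) (hs : IsOpen s) :
    ContinuousOn (vdiv V) s :=
  continuousOn_finsetSum _ fun i _ => (PiLp.continuous_apply 2 _ i).comp_continuousOn
    ((hV.continuousOn_fderiv_of_isOpen hs le_rfl).clm_apply continuousOn_const)

theorem vdiv_smul {g : EuclideanSpace ℝ (Fin N) → ℝ}
    {V : EuclideanSpace ℝ (Fin N) → EuclideanSpace ℝ (Fin N)} {x : EuclideanSpace ℝ (Fin N)}
    (hg : DifferentiableAt ℝ g x) (hV : DifferentiableAt ℝ V x) :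
    vdiv (fun y => g y • V y) x = g x * vdiv V x + fderiv ℝ g x (V x) := by
  have hsum : ∑ i, fderiv ℝ g x (EuclideanSpace.single i 1) * V x i = fderiv ℝ g x (V x) := by
    conv_rhs => rw [← (EuclideanSpace.basisFun (Fin N) ℝ).sum_repr (V x)]
    simp [map_sum, mul_comm]
  simp only [vdiv, fderiv_fun_smul hg hV, add_apply, smul_apply,
    ContinuousLinearMap.smulRight_apply, PiLp.add_apply, PiLp.smul_apply, smul_eq_mul,
    Finset.sum_add_distrib, hsum, Finset.mul_sum]

theorem vdiv_inv_sq_smul_gradient {c : EuclideanSpace ℝ (Fin N) → ℝ} {x : EuclideanSpace ℝ (Fin N)}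
    {α : ℝ} (hc : DifferentiableAt ℝ c x) (hgrad : DifferentiableAt ℝ (gradient c) x)
    (hα : c x + α ≠ 0) :
    vdiv (fun y => ((c y + α) ^ 2)⁻¹ • gradient c y) x =
      (lap c x * (c x + α) - 2 * ‖gradient c x‖ ^ 2) / (c x + α) ^ 3 := by
  have hweight : HasDerivAt (fun t : ℝ => ((t + α) ^ 2)⁻¹) (-2 / (c x + α) ^ 3) (c x) :=
    ((((hasDerivAt_id' (c x)).add_const α).pow 2).inv (pow_ne_zero 2 hα)).congr_deriv
      (by simp only [Pi.pow_apply]; field_simp; ring)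
  have hweight' :
      HasFDerivAt (fun y => ((c y + α) ^ 2)⁻¹) ((-2 / (c x + α) ^ 3) • fderiv ℝ c x) x :=
    hweight.comp_hasFDerivAt x hc.hasFDerivAt
  rw [vdiv_smul hweight'.differentiableAt hgrad, hweight'.fderiv, ← lap]
  simp only [smul_apply, ← inner_gradient_left, real_inner_self_eq_norm_sq, smul_eq_mul]
  field_simp
  ring

theorem neg_vdiv_inv_sq_smul_gradient_pos_iff {c : EuclideanSpace ℝ (Fin N) → ℝ}
    {x : EuclideanSpace ℝ (Fin N)} {α : ℝ} (hc : DifferentiableAt ℝ c x)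
    (hgrad : DifferentiableAt ℝ (gradient c) x) (hα : 0 < c x + α) :
    0 < -vdiv (fun y => ((c y + α) ^ 2)⁻¹ • gradient c y) x ↔
      lap c x * (c x + α) < 2 * ‖gradient c x‖ ^ 2 := by
  rw [vdiv_inv_sq_smul_gradient hc hgrad hα.ne', neg_pos, div_lt_iff₀ (by positivity), zero_mul,
    sub_neg]

end Divergence

theorem A_nonempty_iff_general {N : ℕ} (Ω : Set (EuclideanSpace ℝ (Fin N))) (hΩ : IsOpen Ω)
    (c : EuclideanSpace ℝ (Fin N) → ℝ) (hc : ContDiffOn ℝ 2 c Ω)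
    (hcpos : ∀ x ∈ Ω, 0 < c x) :
    (∃ α : ℝ, 0 < α ∧ ∃ Ω₀ : Set (EuclideanSpace ℝ (Fin N)), IsOpen Ω₀ ∧ Ω₀ ⊆ Ω ∧
        Ω₀.Nonempty ∧ ∀ x ∈ Ω₀, 0 < -vdiv (fun y => ((c y + α) ^ 2)⁻¹ • gradient c y) x) ↔
      (∃ Ω' : Set (EuclideanSpace ℝ (Fin N)), IsOpen Ω' ∧ Ω' ⊆ Ω ∧ Ω'.Nonempty ∧
        ∀ x ∈ Ω', lap c x < 2 * ‖gradient c x‖ ^ 2 / c x) := by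
  have hgrad : ContDiffOn ℝ 1 (gradient c) Ω := hc.gradient_of_isOpen hΩ (by norm_num)
  have hpos_iff {α : ℝ} (hα : 0 < α) {x} (hx : x ∈ Ω) :
      0 < -vdiv (fun y => ((c y + α) ^ 2)⁻¹ • gradient c y) x ↔
        lap c x * (c x + α) < 2 * ‖gradient c x‖ ^ 2 :=
    neg_vdiv_inv_sq_smul_gradient_pos_iff (α := α)
      ((hc.differentiableOn (by norm_num)).differentiableAt (hΩ.mem_nhds hx))
      ((hgrad.differentiableOn one_ne_zero).differentiableAt (hΩ.mem_nhds hx))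
      (by linarith [hcpos x hx])
  constructor
  · rintro ⟨α, hα, Ω₀, hΩ₀, hsub, hne₀, hA⟩
    refine ⟨Ω₀, hΩ₀, hsub, hne₀, fun x hx => ?_⟩
    have hlt := (hpos_iff hα (hsub hx)).1 (hA x hx)
    rw [lt_div_iff₀ (hcpos x (hsub hx))]
    nlinarith [hcpos x (hsub hx), sq_nonneg ‖gradient c x‖]
  · rintro ⟨Ω', -, hsub', ⟨x₀, hx₀⟩, hlt⟩
    have hx₀Ω := hsub' hx₀
    have hsmall : ∀ᶠ α in 𝓝 (0 : ℝ), lap c x₀ * (c x₀ + α) < 2 * ‖gradient c x₀‖ ^ 2 :=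
      (by fun_prop : Continuous fun α => lap c x₀ * (c x₀ + α)).continuousAt.eventually_lt
        continuousAt_const (by simpa [lt_div_iff₀ (hcpos x₀ hx₀Ω)] using hlt x₀ hx₀)
    obtain ⟨α, hαx₀, hα : 0 < α⟩ :=
      ((hsmall.filter_mono (nhdsWithin_le_nhds (s := Ioi 0))).and self_mem_nhdsWithin).exists
    have hcont : ContinuousOn (fun y => 2 * ‖gradient c y‖ ^ 2 - lap c y * (c y + α)) Ω := by
      have hgrad_cont := hgrad.continuousOn
      have hlap_cont : ContinuousOn (lap c) Ω := hgrad.continuousOn_vdiv hΩ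
      have hc_cont := hc.continuousOn
      fun_prop
    refine ⟨α, hα, _, hcont.isOpen_inter_preimage hΩ isOpen_Ioi, inter_subset_left,
      ⟨x₀, hx₀Ω, sub_pos.2 hαx₀⟩, fun x hx => (hpos_iff hα hx.1).2 (sub_pos.1 hx.2)⟩

/-- The set 𝒜 is nonempty iff Δc < 2|∇c|²/c on some open subset. -/
theorem A_nonempty_iff {N : ℕ} (Ω : Set (EuclideanSpace ℝ (Fin N))) (hΩ : IsOpen Ω)
    (hne : Ω.Nonempty) (c : EuclideanSpace ℝ (Fin N) → ℝ) (hc : ContDiffOn ℝ 2 c Ω)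
    (hcpos : ∀ x ∈ Ω, 0 < c x) :
    (∃ α : ℝ, 0 < α ∧ ∃ Ω₀ : Set (EuclideanSpace ℝ (Fin N)), IsOpen Ω₀ ∧ Ω₀ ⊆ Ω ∧
        Ω₀.Nonempty ∧ ∀ x ∈ Ω₀, 0 < -vdiv (fun y => ((c y + α) ^ 2)⁻¹ • gradient c y) x) ↔
      (∃ Ω' : Set (EuclideanSpace ℝ (Fin N)), IsOpen Ω' ∧ Ω' ⊆ Ω ∧ Ω'.Nonempty ∧
        ∀ x ∈ Ω', lap c x < 2 * ‖gradient c x‖ ^ 2 / c x) :=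
  A_nonempty_iff_general Ω hΩ c hc hcpos
end

section
/- Let e solve Δe = 1 in Ω with e = 0 on ∂Ω, and set c = δe + 1 where 0 < δ ≤ min(1/(4‖∇e‖_∞²), 1/(2‖e‖_∞)). Then c > 0 in Ω̄ and Δc ≥ 2|∇c|²/c holds pointwise in Ω. -/
/-!
The Laplacian and the gradient are linear, so `∇c = δ ∇e` and `Δc = δ Δe = δ`. The bound
`δ ≤ 1 / (2‖e‖_∞)` gives `c ≥ 1/2`, and `δ ≤ 1 / (4‖∇e‖_∞²)` gives `2|∇c|² ≤ 2δ²‖∇e‖_∞² ≤ δ/2`;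
hence `2|∇c|²/c ≤ 4|∇c|² ≤ δ = Δc`.
-/

open MeasureTheory Real Set

section Linearity

variable {F : Type*} [NormedAddCommGroup F] [InnerProductSpace ℝ F] [CompleteSpace F]

-- No differentiability is needed: where `f` is not differentiable both sides vanish.
theorem gradient_const_mul_add_const (f : F → ℝ) (a b : ℝ) :
    gradient (fun y => a * f y + b) = a • gradient f := by
  funext x
  have hfderiv : fderiv ℝ (fun y => a * f y + b) x = a • fderiv ℝ f x := by
    rw [fderiv_add_const]
    exact congrFun (fderiv_const_smul_field (f := f) a) x
  simp only [gradient, hfderiv, Pi.smul_apply, map_smul]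

theorem lap_const_mul_add_const {N : ℕ} (f : EuclideanSpace ℝ (Fin N) → ℝ) (a b : ℝ)
    (x : EuclideanSpace ℝ (Fin N)) :
    lap (fun y => a * f y + b) x = a * lap f x := by
  change vdiv (gradient _) x = a * vdiv (gradient f) x
  rw [gradient_const_mul_add_const, vdiv, vdiv, fderiv_const_smul_field, Finset.mul_sum]
  rfl

end Linearity

section SmallParameter

variable {δ t g M G : ℝ}

theorem one_half_le_mul_add_one (hδ : 0 < δ) (ht : |t| ≤ M) (hδM : δ ≤ 1 / (2 * M)) :
    1 / 2 ≤ δ * t + 1 := by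
  have hM : 0 < 2 * M := one_div_pos.mp (hδ.trans_le hδM)
  have hδM' : δ * (2 * M) ≤ 1 := (le_div_iff₀ hM).mp hδM
  have hδt : |δ * t| ≤ δ * M := by
    rw [abs_mul, abs_of_pos hδ]
    exact mul_le_mul_of_nonneg_left ht hδ.le
  linarith [neg_abs_le (δ * t)]

theorem four_mul_sq_le (hδ : 0 < δ) (hg : |g| ≤ G) (hδG : δ ≤ 1 / (4 * G ^ 2)) :
    4 * (δ * g) ^ 2 ≤ δ := by
  have hG : 0 < 4 * G ^ 2 := one_div_pos.mp (hδ.trans_le hδG)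
  have hδG' : δ * (4 * G ^ 2) ≤ 1 := (le_div_iff₀ hG).mp hδG
  have hgG : g ^ 2 ≤ G ^ 2 := sq_le_sq.mpr (hg.trans (le_abs_self G))
  calc 4 * (δ * g) ^ 2 = δ * (δ * (4 * g ^ 2)) := by ring
    _ ≤ δ * (δ * (4 * G ^ 2)) := by gcongr
    _ ≤ δ * 1 := by gcongr
    _ = δ := mul_one δ

theorem two_mul_sq_div_le (hδ : 0 < δ) (ht : |t| ≤ M) (hδM : δ ≤ 1 / (2 * M)) (hg : |g| ≤ G)
    (hδG : δ ≤ 1 / (4 * G ^ 2)) :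
    2 * (δ * g) ^ 2 / (δ * t + 1) ≤ δ := by
  have hc := one_half_le_mul_add_one hδ ht hδM
  rw [div_le_iff₀ (by linarith)]
  nlinarith [four_mul_sq_le hδ hg hδG]

end SmallParameter

theorem example_A_empty_general {N : ℕ} (Ω : Set (EuclideanSpace ℝ (Fin N)))
    (e : EuclideanSpace ℝ (Fin N) → ℝ)
    (hlap : ∀ x ∈ Ω, lap e x = 1)
    (Ge Me : ℝ)
    (hGe' : ∀ x ∈ closure Ω, ‖gradient e x‖ ≤ Ge)
    (hMe' : ∀ x ∈ closure Ω, |e x| ≤ Me)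
    (δ : ℝ) (hδ : 0 < δ) (hδ1 : δ ≤ 1 / (4 * Ge ^ 2)) (hδ2 : δ ≤ 1 / (2 * Me)) :
    (∀ x ∈ closure Ω, 0 < δ * e x + 1) ∧
      (∀ x ∈ Ω,
        2 * ‖gradient (fun y => δ * e y + 1) x‖ ^ 2 / (δ * e x + 1) ≤
          lap (fun y => δ * e y + 1) x) := by
  refine ⟨fun x hx => by linarith [one_half_le_mul_add_one hδ (hMe' x hx) hδ2], fun x hx => ?_⟩
  have hx' : x ∈ closure Ω := subset_closure hx
  rw [lap_const_mul_add_const, hlap x hx, mul_one, gradient_const_mul_add_const, Pi.smul_apply,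
    norm_smul, Real.norm_of_nonneg hδ.le]
  exact two_mul_sq_div_le hδ (hMe' x hx') hδ2 ((abs_norm _).trans_le (hGe' x hx')) hδ1

/-- Remark 3.2: with Δe = 1, e = 0 on ∂Ω, and c = δe + 1 for δ small enough,
c is positive and satisfies Δc ≥ 2|∇c|²/c in Ω. -/
theorem example_A_empty {N : ℕ} (Ω : Set (EuclideanSpace ℝ (Fin N))) (hΩ : IsOpen Ω)
    (hΩb : Bornology.IsBounded Ω) (e : EuclideanSpace ℝ (Fin N) → ℝ)
    (he : ContDiffOn ℝ 2 e (closure Ω)) (hlap : ∀ x ∈ Ω, lap e x = 1)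
    (hbd : ∀ x ∈ frontier Ω, e x = 0)
    (Ge Me : ℝ) (hGe : 0 < Ge) (hMe : 0 < Me)
    (hGe' : ∀ x ∈ closure Ω, ‖gradient e x‖ ≤ Ge)
    (hMe' : ∀ x ∈ closure Ω, |e x| ≤ Me)
    (δ : ℝ) (hδ : 0 < δ) (hδ1 : δ ≤ 1 / (4 * Ge ^ 2)) (hδ2 : δ ≤ 1 / (2 * Me)) :
    (∀ x ∈ closure Ω, 0 < δ * e x + 1) ∧
      (∀ x ∈ Ω,
        2 * ‖gradient (fun y => δ * e y + 1) x‖ ^ 2 / (δ * e x + 1) ≤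
          lap (fun y => δ * e y + 1) x) :=
  example_A_empty_general Ω e hlap Ge Me hGe' hMe' δ hδ hδ1 hδ2
end
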